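/- Suppose i, g ∈ [n] and there exists q with i ≤ q < g and v_q < u_{q+1}. Then for every j ∈ [u_i+1, v_i] and every h ∈ [u_g+1, v_g], the elements a_{i,j} and a_{g,h} are incomparable in 𝓛 (neither a_{i,j} ≤ a_{g,h} nor a_{g,h} ≤ a_{i,j}). -/

import Mathlib

namespace LadderPaper

/-- The tuple `a_{i,j}`: entry `t` is `u t` for `t < i` and `max (j + (t - i)) (u t)` for
`t ≥ i` (indices `t ∈ [1,n]`; entries outside `[1,n]` are set to `0`). -/
def atuple (u : ℕ → ℤ) (n i : ℕ) (j : ℤ) : ℕ → ℤ := fun t =>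
  if 1 ≤ t ∧ t ≤ n then
    (if t < i then u t else max (j + ((t : ℤ) - (i : ℤ))) (u t))
  else 0

/-- The tuple `b_{i,j}`: like `a_{i,j}` but with `i`-th entry `j - 1`. -/
def btuple (u : ℕ → ℤ) (n i : ℕ) (j : ℤ) : ℕ → ℤ := fun t =>
  if 1 ≤ t ∧ t ≤ n then
    (if t < i then u t
     else if t = i then j - 1
     else max (j + ((t : ℤ) - (i : ℤ))) (u t))
  else 0

/-- The tuple `(u_1, …, u_n)`. -/
def utuple (u : ℕ → ℤ) (n : ℕ) : ℕ → ℤ := fun t =>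
  if 1 ≤ t ∧ t ≤ n then u t else 0

/-- The lattice `𝓛` of tuples `c` with `u t ≤ c t ≤ v t` for `t ∈ [1,n]`, strictly
increasing entries, and (normalization) `c t = 0` outside `[1,n]`.  It carries the
componentwise (induced product) order. -/
def ladderL (n : ℕ) (u v : ℕ → ℤ) : Set (ℕ → ℤ) :=
  {c | (∀ t, 1 ≤ t → t ≤ n → u t ≤ c t ∧ c t ≤ v t) ∧
       (∀ t, 1 ≤ t → t + 1 ≤ n → c t < c (t + 1)) ∧
       (∀ t, t = 0 ∨ n < t → c t = 0)}

/-- The set `P_𝓛 = { a_{i,j} : i ∈ [n], j ∈ [u_i + 1, v_i] }`. -/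
def PL (n : ℕ) (u v : ℕ → ℤ) : Set (ℕ → ℤ) :=
  {x | ∃ i : ℕ, ∃ j : ℤ, 1 ≤ i ∧ i ≤ n ∧ u i + 1 ≤ j ∧ j ≤ v i ∧ x = atuple u n i j}

/-- The product poset `𝓛 × [r]`. -/
def ladderLr (n : ℕ) (u v : ℕ → ℤ) (r : ℤ) : Set ((ℕ → ℤ) × ℤ) :=
  {p | p.1 ∈ ladderL n u v ∧ 1 ≤ p.2 ∧ p.2 ≤ r}

/-- The set `P_{𝓛×[r]} = { (a_{i,j}, 1) } ∪ { ((u_1,…,u_n), k) : k ∈ [2,r] }`. -/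
def PLr (n : ℕ) (u v : ℕ → ℤ) (r : ℤ) : Set ((ℕ → ℤ) × ℤ) :=
  {p | (p.1 ∈ PL n u v ∧ p.2 = 1) ∨ (p.1 = utuple u n ∧ 2 ≤ p.2 ∧ p.2 ≤ r)}

/-- `ε_i > 1`, with the convention `ε_n > 1` (i.e. `i = n` or `u_{i+1} - u_i > 1`). -/
def epsGt1 (u : ℕ → ℤ) (n i : ℕ) : Prop := i = n ∨ 1 < u (i + 1) - u i

/-- `θ_{i-1} > 1`, with the convention `θ_0 > 1` (i.e. `i = 1` or `v_i - v_{i-1} > 1`). -/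
def thetaGt1 (v : ℕ → ℤ) (i : ℕ) : Prop := i = 1 ∨ 1 < v i - v (i - 1)

/-- Membership in `C = { i ∈ [n-1] : v_i < u_{i+1} } ∪ { n }`. -/
def inC (n : ℕ) (u v : ℕ → ℤ) (i : ℕ) : Prop :=
  (1 ≤ i ∧ i + 1 ≤ n ∧ v i < u (i + 1)) ∨ i = n

/-- The set `C = { i ∈ [n-1] : v_i < u_{i+1} } ∪ { n }`. -/
def Cset (n : ℕ) (u v : ℕ → ℤ) : Set ℕ :=
  {i | 1 ≤ i ∧ i + 1 ≤ n ∧ v i < u (i + 1)} ∪ {n}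

/-- `[p,q]` is one of the blocks `[p_s, q_s]` determined by `C`: `q ∈ C`,
no element of `C` lies in `[p, q-1]`, and either `p = 1` or `p - 1 ∈ C`. -/
def IsBlock (n : ℕ) (u v : ℕ → ℤ) (p q : ℕ) : Prop :=
  1 ≤ p ∧ p ≤ q ∧ q ≤ n ∧ inC n u v q ∧
    (∀ j, p ≤ j → j < q → ¬ inC n u v j) ∧ (p = 1 ∨ inC n u v (p - 1))

/-- `i0 = min { i ∈ [p,q] : ε_i > 1 }` (with the convention `ε_n > 1`). -/
def IsBlockMin (n : ℕ) (u : ℕ → ℤ) (p q i0 : ℕ) : Prop :=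
  p ≤ i0 ∧ i0 ≤ q ∧ epsGt1 u n i0 ∧ ∀ j, p ≤ j → j < i0 → ¬ epsGt1 u n j

/-- The comparability graph of a poset: two distinct elements are adjacent
iff they are comparable. -/
def compGraph (α : Type*) [Preorder α] : SimpleGraph α where
  Adj x y := x ≠ y ∧ (x ≤ y ∨ y ≤ x)
  symm := ⟨fun x y h => ⟨Ne.symm h.1, Or.symm h.2⟩⟩
  loopless := ⟨fun x h => h.1 rfl⟩

/-- A poset is pure if all of its maximal chains have the same cardinality
(equivalently, the same length). -/
def IsPure (α : Type*) [Preorder α] : Prop :=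
  ∀ A B : Set α, IsMaxChain (· ≤ ·) A → IsMaxChain (· ≤ ·) B → A.ncard = B.ncard

/-! At entry `i`, `a_{i,j}` has `j > u_i` while `a_{g,l}` (with `i < g`) is still `u_i`. Conversely,
since both `u` and `v` increase by at least one per step, the gap `v_q < u_{q+1}` gives
`j + (g - i) ≤ v_i + (g - i) ≤ u_g`, so `a_{i,j}` has fallen back to `u_g` at entry `g`,
where `a_{g,l}` has `l > u_g`. -/

section Ladder

variable {u : ℕ → ℤ} {n i t : ℕ} {j : ℤ}

lemma add_sub_le_of_lt_succ {f : ℕ → ℤ} (hf : ∀ k, 1 ≤ k → k + 1 ≤ n → f k < f (k + 1))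
    {a b : ℕ} (ha : 1 ≤ a) (hab : a ≤ b) (hb : b ≤ n) :
    f a + ((b : ℤ) - a) ≤ f b := by
  induction b, hab using Nat.le_induction with
  | base => simp
  | succ k hk ih =>
    have hstep := hf k (ha.trans hk) hb
    have hprev := ih (by omega)
    push_cast
    omega

lemma add_sub_le_of_cut {v : ℕ → ℤ}
    (hu : ∀ k, 1 ≤ k → k + 1 ≤ n → u k < u (k + 1))
    (hv : ∀ k, 1 ≤ k → k + 1 ≤ n → v k < v (k + 1))
    {q g : ℕ} (hi : 1 ≤ i) (hiq : i ≤ q) (hqg : q < g) (hgn : g ≤ n) (hcut : v q < u (q + 1)) :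
    v i + ((g : ℤ) - i) ≤ u g := by
  have hvq := add_sub_le_of_lt_succ hv hi hiq (by omega)
  have hug := add_sub_le_of_lt_succ hu (a := q + 1) (by omega) hqg hgn
  push_cast at hug
  omega

lemma atuple_of_lt (ht1 : 1 ≤ t) (htn : t ≤ n) (hti : t < i) : atuple u n i j t = u t := by
  simp [atuple, ht1, htn, hti]

lemma atuple_of_le (ht1 : 1 ≤ t) (htn : t ≤ n) (hit : i ≤ t) :
    atuple u n i j t = max (j + ((t : ℤ) - i)) (u t) := by
  simp [atuple, ht1, htn, hit.not_gt]

lemma atuple_self (hi1 : 1 ≤ i) (hin : i ≤ n) (hj : u i ≤ j) : atuple u n i j i = j := by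
  rw [atuple_of_le hi1 hin le_rfl, sub_self, add_zero, max_eq_left hj]

lemma not_atuple_le_atuple_of_lt {g : ℕ} {l : ℤ} (hi1 : 1 ≤ i) (hig : i < g) (hgn : g ≤ n)
    (hj : u i < j) : ¬ atuple u n i j ≤ atuple u n g l := fun hle => by
  have hle_i := hle i
  rw [atuple_self hi1 (by omega) hj.le, atuple_of_lt hi1 (by omega) hig] at hle_i
  exact hj.not_ge hle_i

lemma not_atuple_le_atuple_of_add_sub_le {g : ℕ} {l : ℤ} (hig : i ≤ g) (hg1 : 1 ≤ g)
    (hgn : g ≤ n) (hj : j + ((g : ℤ) - i) ≤ u g) (hl : u g < l) :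
    ¬ atuple u n g l ≤ atuple u n i j := fun hle => by
  have hle_g := hle g
  rw [atuple_self hg1 hgn hl.le, atuple_of_le hg1 hgn hig, max_eq_right hj] at hle_g
  exact hl.not_ge hle_g

end Ladder

theorem stmt7_general
    (n : ℕ) (u v : ℕ → ℤ)
    (humono : ∀ i, 1 ≤ i → i + 1 ≤ n → u i < u (i + 1))
    (hvmono : ∀ i, 1 ≤ i → i + 1 ≤ n → v i < v (i + 1))
    (i g : ℕ) (hi1 : 1 ≤ i) (hg1 : 1 ≤ g) (hgn : g ≤ n)
    (hq : ∃ q, i ≤ q ∧ q < g ∧ v q < u (q + 1)) :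
    ∀ j l : ℤ, u i + 1 ≤ j → j ≤ v i → u g + 1 ≤ l → l ≤ v g →
      ¬ atuple u n i j ≤ atuple u n g l ∧ ¬ atuple u n g l ≤ atuple u n i j := by
  obtain ⟨q, hiq, hqg, hcut⟩ := hq
  intro j l hj hjv hl _
  have hfall := add_sub_le_of_cut humono hvmono hi1 hiq hqg hgn hcut
  exact ⟨not_atuple_le_atuple_of_lt hi1 (hiq.trans_lt hqg) hgn hj,
    not_atuple_le_atuple_of_add_sub_le (by omega) hg1 hgn (by omega) hl⟩

theorem stmt7
    (n m : ℕ) (u v : ℕ → ℤ)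
    (hn : 1 ≤ n) (hnm : n < m)
    (hu1 : u 1 = 1)
    (humono : ∀ i, 1 ≤ i → i + 1 ≤ n → u i < u (i + 1))
    (hum : u n < (m : ℤ))
    (hv1 : 1 < v 1)
    (hvmono : ∀ i, 1 ≤ i → i + 1 ≤ n → v i < v (i + 1))
    (hvn : v n = (m : ℤ))
    (huv : ∀ i, 1 ≤ i → i ≤ n → u i < v i)
    (hstep : ∀ i, 1 ≤ i → i + 1 ≤ n → u (i + 1) ≤ v i + 1)
    (i g : ℕ) (hi1 : 1 ≤ i) (hin : i ≤ n) (hg1 : 1 ≤ g) (hgn : g ≤ n)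
    (hq : ∃ q, i ≤ q ∧ q < g ∧ v q < u (q + 1)) :
    ∀ j l : ℤ, u i + 1 ≤ j → j ≤ v i → u g + 1 ≤ l → l ≤ v g →
      ¬ atuple u n i j ≤ atuple u n g l ∧ ¬ atuple u n g l ≤ atuple u n i j :=
  stmt7_general n u v humono hvmono i g hi1 hg1 hgn hq

end LadderPaper
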